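/- If C ≥ 1 − α (equivalently, the inflection point C/(1−α) is at least 1), then the wealth-update map f has exactly one fixed point: there exists a unique x ∈ ℝ with f(x) = x, and this x lies in the open interval (0,1). In particular, α < 1 − C is a necessary condition for f to have more than one fixed point. -/

import Mathlib

/-!
For `x ≤ 1` the argument `K (C - (1 - α) x)` of `Φ` is nonnegative because `C ≥ 1 - α`, and
on `[0, ∞)` the Gaussian CDF is concave since its density decreases there. Hence `f` is convex
on `(-∞, 1]`, and so is `x ↦ f x - x`; being negative at `1`, this convex function vanishes at
most once to the left of `1`. Every fixed point lies in `(0, 1)` because `f` takes values there, and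
the intermediate value theorem provides one.
-/

open Real Set MeasureTheory ProbabilityTheory Function

theorem setIntegral_pos_of_pos {X : Type*} [MeasurableSpace X] {μ : Measure X} {φ : X → ℝ}
    {s : Set X} (hs : MeasurableSet s) (hpos : ∀ t ∈ s, 0 < φ t) (hφ : IntegrableOn φ s μ)
    (hμs : μ s ≠ 0) : 0 < ∫ t in s, φ t ∂μ := by
  have hsupp : support φ ∩ s = s := inter_eq_right.2 fun t ht => (hpos t ht).ne'
  refine (setIntegral_pos_iff_support_of_nonneg_ae ?_ hφ).2 ?_
  · exact (ae_restrict_iff' hs).2 (ae_of_all _ fun t ht => (hpos t ht).le)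
  · rw [hsupp]; exact pos_iff_ne_zero.2 hμs

theorem hasDerivAt_integral_Iic {φ : ℝ → ℝ} {u : ℝ} (hφ : Integrable φ)
    (hu : ContinuousAt φ u) : HasDerivAt (fun v => ∫ t in Iic v, φ t) (φ u) u := by
  have hsplit : (fun v => ∫ t in Iic v, φ t) =
      fun v => (∫ t in Iic 0, φ t) + ∫ t in (0 : ℝ)..v, φ t :=
    funext fun v => by
      rw [← intervalIntegral.integral_Iic_sub_Iic hφ.integrableOn hφ.integrableOn]; ring
  rw [hsplit]
  exact (intervalIntegral.integral_hasDerivAt_right hφ.intervalIntegrable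
    hφ.aestronglyMeasurable.stronglyMeasurableAtFilter hu).const_add _

theorem continuous_gaussianPDFReal (μ : ℝ) (v : NNReal) : Continuous (gaussianPDFReal μ v) := by
  unfold gaussianPDFReal; fun_prop

theorem antitoneOn_gaussianPDFReal (μ : ℝ) (v : NNReal) :
    AntitoneOn (gaussianPDFReal μ v) (Ici μ) := by
  intro x hx y _ hxy
  have : 0 ≤ x - μ := sub_nonneg.2 hx
  simp only [gaussianPDFReal]
  gcongr

noncomputable def stdGaussianCDF (u : ℝ) : ℝ := ∫ t in Iic u, gaussianPDFReal 0 1 t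

theorem stdGaussianCDF_eq_integral (u : ℝ) :
    stdGaussianCDF u = ∫ t in Iic u, (√(2 * π))⁻¹ * rexp (-t ^ 2 / 2) := by
  simp [stdGaussianCDF, gaussianPDFReal]

theorem stdGaussianCDF_pos (u : ℝ) : 0 < stdGaussianCDF u :=
  setIntegral_pos_of_pos measurableSet_Iic (fun t _ => gaussianPDFReal_pos 0 1 t one_ne_zero)
    (integrable_gaussianPDFReal 0 1).integrableOn (by simp)

theorem stdGaussianCDF_lt_one (u : ℝ) : stdGaussianCDF u < 1 := by
  have hint := integrable_gaussianPDFReal 0 1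
  have htail : 0 < ∫ t in Ioi u, gaussianPDFReal 0 1 t :=
    setIntegral_pos_of_pos measurableSet_Ioi (fun t _ => gaussianPDFReal_pos 0 1 t one_ne_zero)
      hint.integrableOn (by simp)
  have hsum := intervalIntegral.integral_Iic_add_Ioi hint.integrableOn hint.integrableOn (b := u)
  rw [integral_gaussianPDFReal_eq_one 0 one_ne_zero] at hsum
  rw [stdGaussianCDF]
  linarith

theorem hasDerivAt_stdGaussianCDF (u : ℝ) :
    HasDerivAt stdGaussianCDF (gaussianPDFReal 0 1 u) u :=
  hasDerivAt_integral_Iic (integrable_gaussianPDFReal 0 1)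
    (continuous_gaussianPDFReal 0 1).continuousAt

theorem continuous_stdGaussianCDF : Continuous stdGaussianCDF :=
  continuous_iff_continuousAt.2 fun u => (hasDerivAt_stdGaussianCDF u).continuousAt

theorem concaveOn_stdGaussianCDF : ConcaveOn ℝ (Ici 0) stdGaussianCDF := by
  have hderiv : deriv stdGaussianCDF = gaussianPDFReal 0 1 :=
    funext fun u => (hasDerivAt_stdGaussianCDF u).deriv
  refine AntitoneOn.concaveOn_of_deriv (convex_Ici 0)
    (fun u _ => (hasDerivAt_stdGaussianCDF u).continuousAt.continuousWithinAt)
    (fun u _ => (hasDerivAt_stdGaussianCDF u).differentiableAt.differentiableWithinAt) ?_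
  rw [hderiv, interior_Ici]
  exact (antitoneOn_gaussianPDFReal 0 1).mono Ioi_subset_Ici_self

theorem convexOn_one_sub_stdGaussianCDF_affine {K C c : ℝ} (hK : 0 ≤ K) (hc : 0 ≤ c)
    (hC : c ≤ C) : ConvexOn ℝ (Iic 1) fun x => 1 - stdGaussianCDF (K * (C - c * x)) := by
  let g : ℝ →ᵃ[ℝ] ℝ :=
    { toFun := fun x => K * (C - c * x)
      linear := -(K * c) • LinearMap.id
      map_vadd' := fun x v => by
        simp only [vadd_eq_add, LinearMap.smul_apply, LinearMap.id_coe, id_eq, smul_eq_mul]; ring }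
  have hsub : Iic 1 ⊆ g ⁻¹' Ici 0 := fun x hx =>
    mul_nonneg hK (by nlinarith [mem_Iic.1 hx])
  have hfg : (fun x => 1 - stdGaussianCDF (K * (C - c * x))) = -stdGaussianCDF ∘ g + fun _ => 1 :=
    funext fun x => by
      simp only [AffineMap.coe_mk, Pi.add_apply, Pi.neg_apply, comp_apply, g]; ring
  rw [hfg]
  exact ((concaveOn_stdGaussianCDF.comp_affineMap g).subset hsub (convex_Iic 1)).neg.add_const 1

theorem exists_isFixedPt_mem_Ioo {f : ℝ → ℝ} {a b : ℝ} (hab : a ≤ b)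
    (hf : ContinuousOn f (Icc a b)) (ha : a < f a) (hb : f b < b) :
    ∃ x ∈ Ioo a b, IsFixedPt f x := by
  obtain ⟨x, hx, hfx⟩ := intermediate_value_Ioo' hab (hf.sub continuousOn_id)
    (show (0 : ℝ) ∈ Ioo (f b - b) (f a - a) from ⟨by linarith, by linarith⟩)
  exact ⟨x, hx, sub_eq_zero.1 hfx⟩

theorem ConvexOn.eq_of_isFixedPt {f : ℝ → ℝ} {b x y : ℝ} (hf : ConvexOn ℝ (Iic b) f)
    (hb : f b < b) (hx : IsFixedPt f x) (hy : IsFixedPt f y) (hxb : x < b) (hyb : y < b) :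
    x = y := by
  wlog hxy : x < y generalizing x y
  · rcases (not_lt.1 hxy).eq_or_lt with h | h
    · exact h.symm
    · exact (this hy hx hyb hxb h).symm
  have hg := hf.sub (concaveOn_id (convex_Iic b))
  have hy_seg : y ∈ openSegment ℝ x b := by
    rw [openSegment_eq_Ioo (hxy.trans hyb)]; exact ⟨hxy, hyb⟩
  have := hg.lt_left_of_right_lt hxb.le (le_refl b) hy_seg
    (show f b - b < f y - y by rw [hy.eq, sub_self]; linarith)
  simp [hx.eq, hy.eq] at this

theorem unique_fixed_point_of_late_inflection_general
    (γ σ C α : ℝ) (hα : α ∈ Set.Ico (0 : ℝ) 1)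
    (Φ : ℝ → ℝ)
    (hΦ : ∀ u, Φ u = ∫ t in Set.Iic u, (Real.sqrt (2 * π))⁻¹ * Real.exp (-t ^ 2 / 2))
    (K : ℝ) (hK : K = Real.sqrt (γ ^ 2 + σ ^ 2) / (α * γ ^ 2 + (1 - α) * σ ^ 2))
    (f : ℝ → ℝ) (hf : f = fun x => 1 - Φ (K * (C - (1 - α) * x)))
    (hC : C ≥ 1 - α) :
    ∃ x : ℝ, f x = x ∧ x ∈ Set.Ioo (0 : ℝ) 1 ∧ ∀ y : ℝ, f y = y → y = x := by
  obtain ⟨hα0, hα1⟩ := hα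
  obtain rfl : Φ = stdGaussianCDF := funext fun u => by rw [hΦ, stdGaussianCDF_eq_integral]
  have hK0 : 0 ≤ K := hK ▸ div_nonneg (sqrt_nonneg _)
    (add_nonneg (by positivity) (mul_nonneg (by linarith) (sq_nonneg σ)))
  have hf_mem : ∀ x, f x ∈ Ioo 0 1 := fun x => by
    rw [hf]
    exact ⟨sub_pos.2 (stdGaussianCDF_lt_one _), sub_lt_self 1 (stdGaussianCDF_pos _)⟩
  have hconv : ConvexOn ℝ (Iic 1) f :=
    hf ▸ convexOn_one_sub_stdGaussianCDF_affine hK0 (by linarith) hC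
  have hcont : Continuous f :=
    hf ▸ continuous_const.sub (continuous_stdGaussianCDF.comp (by fun_prop))
  obtain ⟨x, hx, hfx⟩ :=
    exists_isFixedPt_mem_Ioo zero_le_one hcont.continuousOn (hf_mem 0).1 (hf_mem 1).2
  refine ⟨x, hfx, hx, fun y hfy => ?_⟩
  have hy : y < 1 := hfy ▸ (hf_mem y).2
  exact hconv.eq_of_isFixedPt (hf_mem 1).2 hfy hfx hy hx.2

/-- if `C ≥ 1 - α` (the inflection point `C/(1-α)` is at least 1), then the
wealth-update map `f` has exactly one fixed point, and it lies in `(0, 1)`. In particular,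
`α < 1 - C` is necessary for more than one fixed point. -/
theorem unique_fixed_point_of_late_inflection
    (γ σ C α : ℝ) (hγ : 0 < γ) (hσ : 0 < σ) (hα : α ∈ Set.Ico (0 : ℝ) 1)
    (Φ : ℝ → ℝ)
    (hΦ : ∀ u, Φ u = ∫ t in Set.Iic u, (Real.sqrt (2 * π))⁻¹ * Real.exp (-t ^ 2 / 2))
    (K : ℝ) (hK : K = Real.sqrt (γ ^ 2 + σ ^ 2) / (α * γ ^ 2 + (1 - α) * σ ^ 2))
    (f : ℝ → ℝ) (hf : f = fun x => 1 - Φ (K * (C - (1 - α) * x)))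
    (hC : C ≥ 1 - α) :
    ∃ x : ℝ, f x = x ∧ x ∈ Set.Ioo (0 : ℝ) 1 ∧ ∀ y : ℝ, f y = y → y = x :=
  unique_fixed_point_of_late_inflection_general γ σ C α hα Φ hΦ K hK f hf hC
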